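/- arXiv:1505.03604 — 3 statements merged into one kernel-verified Lean document; each statement's English description precedes it below -/
import Mathlib

section
/- Let H be a real Hilbert space, D a dictionary in H, and f ∈ A_1(D). Suppose (f_m)_{m≥0} is a sequence generated by the Rescaled Pure Greedy Algorithm RPGA(D) for f: f_0 = 0, and for each m ≥ 1, if f_{m−1} = f then f_m := f; otherwise there is φ_m ∈ D with |⟨f − f_{m−1}, φ_m⟩| = sup_{φ∈D} |⟨f − f_{m−1}, φ⟩|, and with λ_m := ⟨f − f_{m−1}, φ_m⟩, ĥ_m := f_{m−1} + λ_m φ_m, and s_m := ⟨f, ĥ_m⟩ / ‖ĥ_m‖², one sets f_m := s_m ĥ_m. Then for every m ≥ 1, ‖f − f_m‖ ≤ |f|_{A_1(D)} · m^{−1/2}. -/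
/-!
Rescaling makes `f_m` the orthogonal projection of `f` onto the line through `ĥ_m`, so the
residual `r_m = f - f_m` is orthogonal to `f_m` and `⟪r_m, f⟫ = ‖r_m‖²`. Testing `f ∈ A₁(D, M)`
against `r_m` gives `‖r_m‖² ≤ M |λ_{m+1}|`, while the projection onto the line through
`ĥ_{m+1}` is no farther from `f` than `ĥ_{m+1}` itself, which loses `λ_{m+1}²`. Hence
`a_m = ‖r_m‖²` satisfies `a_{m+1} ≤ a_m - a_m² / M²` with `a_0 ≤ M²`, which forces `a_m ≤ M² / m`.
-/

open scoped BigOperators RealInnerProductSpace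

/-- A dictionary in a normed space: a set of norm-one elements with dense linear span. -/
def IsDictionary (H : Type*) [NormedAddCommGroup H] [NormedSpace ℝ H] (D : Set H) : Prop :=
  (∀ φ ∈ D, ‖φ‖ = 1) ∧ Dense (Submodule.span ℝ D : Set H)

/-- Finite linear combinations of dictionary elements with coefficients of total
absolute sum at most `M`. -/
def A1Pre (H : Type*) [NormedAddCommGroup H] [NormedSpace ℝ H] (D : Set H) (M : ℝ) : Set H :=
  {g | ∃ (n : ℕ) (c : Fin n → ℝ) (φ : Fin n → H),
    (∀ i, φ i ∈ D) ∧ (∑ i, |c i|) ≤ M ∧ g = ∑ i, c i • φ i}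

/-- The class `A₁(D, M)`: the closure of `A1Pre`. -/
def A1 (H : Type*) [NormedAddCommGroup H] [NormedSpace ℝ H] (D : Set H) (M : ℝ) : Set H :=
  closure (A1Pre H D M)

/-- The class `A₁(D)`: the union of the classes `A₁(D, M)` over all `M > 0`. -/
def A1Class (H : Type*) [NormedAddCommGroup H] [NormedSpace ℝ H] (D : Set H) : Set H :=
  ⋃ M ∈ Set.Ioi (0 : ℝ), A1 H D M

/-- The "semi-norm" `|f|_{A₁(D)} = inf {M : f ∈ A₁(D, M)}`. -/
noncomputable def A1Norm (H : Type*) [NormedAddCommGroup H] [NormedSpace ℝ H]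
    (D : Set H) (f : H) : ℝ :=
  sInf {M : ℝ | 0 < M ∧ f ∈ A1 H D M}

section Projection

variable {H : Type*} [NormedAddCommGroup H] [InnerProductSpace ℝ H]

theorem smul_inner_div_norm_sq_eq_starProjection (f h : H) :
    (⟪f, h⟫ / ‖h‖ ^ 2) • h = (ℝ ∙ h).starProjection f := by
  rw [Submodule.starProjection_singleton, real_inner_comm]
  rfl

theorem Submodule.norm_sub_starProjection_le (U : Submodule ℝ H) [U.HasOrthogonalProjection]
    (y : H) {x : H} (hx : x ∈ U) : ‖y - U.starProjection y‖ ≤ ‖y - x‖ := by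
  rw [Submodule.starProjection_minimal]
  exact ciInf_le ⟨0, by rintro _ ⟨z, rfl⟩; positivity⟩ (⟨x, hx⟩ : U)

end Projection

section A1

theorem norm_le_of_mem_A1 {H : Type*} [NormedAddCommGroup H] [NormedSpace ℝ H] {D : Set H}
    (hD : ∀ φ ∈ D, ‖φ‖ = 1) {M : ℝ} {f : H} (hf : f ∈ A1 H D M) : ‖f‖ ≤ M := by
  refine closure_minimal ?_ (isClosed_le continuous_norm continuous_const) hf
  rintro _ ⟨n, c, φ, hφ, hc, rfl⟩
  calc ‖∑ i, c i • φ i‖ ≤ ∑ i, ‖c i • φ i‖ := norm_sum_le _ _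
    _ = ∑ i, |c i| := by simp [norm_smul, hD _ (hφ _)]
    _ ≤ M := hc

variable {H : Type*} [NormedAddCommGroup H] [InnerProductSpace ℝ H]

theorem inner_le_mul_of_mem_A1 {D : Set H} {M : ℝ} {f : H} (hf : f ∈ A1 H D M)
    {r : H} {c : ℝ} (hc : 0 ≤ c) (hr : ∀ ψ ∈ D, |⟪r, ψ⟫| ≤ c) : ⟪r, f⟫ ≤ M * c := by
  have hclosed : IsClosed {g : H | ⟪r, g⟫ ≤ M * c} :=
    isClosed_le (continuous_const.inner continuous_id) continuous_const
  refine closure_minimal ?_ hclosed hf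
  rintro _ ⟨n, a, φ, hφ, ha, rfl⟩
  calc ⟪r, ∑ i, a i • φ i⟫ = ∑ i, a i * ⟪r, φ i⟫ := by simp [inner_sum, real_inner_smul_right]
    _ ≤ ∑ i, |a i| * c := Finset.sum_le_sum fun i _ =>
      calc a i * ⟪r, φ i⟫ ≤ |a i * ⟪r, φ i⟫| := le_abs_self _
        _ = |a i| * |⟪r, φ i⟫| := abs_mul _ _
        _ ≤ |a i| * c := by gcongr; exact hr _ (hφ i)
    _ = (∑ i, |a i|) * c := (Finset.sum_mul _ _ _).symm
    _ ≤ M * c := by gcongr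

theorem le_A1Norm_mul {D : Set H} {f : H} (hf : f ∈ A1Class H D) {x t : ℝ} (ht : 0 < t)
    (hx : ∀ M, 0 < M → f ∈ A1 H D M → x ≤ M * t) : x ≤ A1Norm H D f * t := by
  obtain ⟨M, hM, hfM⟩ : ∃ M, 0 < M ∧ f ∈ A1 H D M := by
    simpa only [A1Class, Set.mem_iUnion, Set.mem_Ioi, exists_prop] using hf
  rw [← div_le_iff₀ ht]
  exact le_csInf ⟨M, hM, hfM⟩ fun M ⟨hM, hfM⟩ => (div_le_iff₀ ht).2 (hx M hM hfM)

end A1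

theorem abs_inner_le_of_eq_sSup {H : Type*} [NormedAddCommGroup H] [InnerProductSpace ℝ H]
    {D : Set H} (hD : ∀ φ ∈ D, ‖φ‖ = 1) {r φ : H}
    (hφ : |⟪r, φ⟫| = sSup {x : ℝ | ∃ ψ ∈ D, x = |⟪r, ψ⟫|}) :
    ∀ ψ ∈ D, |⟪r, ψ⟫| ≤ |⟪r, φ⟫| := by
  have hbdd : BddAbove {x : ℝ | ∃ ψ ∈ D, x = |⟪r, ψ⟫|} := by
    refine ⟨‖r‖, ?_⟩
    rintro _ ⟨ψ, hψ, rfl⟩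
    simpa [hD ψ hψ] using abs_real_inner_le_norm r ψ
  intro ψ hψ
  rw [hφ]
  exact le_csSup hbdd ⟨ψ, hψ, rfl⟩

theorem le_div_natCast_of_le_sub_sq_div {a : ℕ → ℝ} {A : ℝ} (hA : 0 < A) (h0 : a 0 ≤ A)
    (ha : ∀ n, a (n + 1) ≤ a n - a n ^ 2 / A) : ∀ m : ℕ, 1 ≤ m → a m ≤ A / m := by
  refine Nat.le_induction ?_ fun n hn ih => ?_
  · have : 0 ≤ a 0 ^ 2 / A := by positivity
    linarith [ha 0]
  · have hn' : (1 : ℝ) ≤ n := by exact_mod_cast hn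
    rw [le_div_iff₀ (by positivity)] at ih
    have hA' : a n ≤ A := by nlinarith
    -- `A² - (n + 1)(A x - x²) = (A - n x)(A - x) + x²`
    have hbound : a n - a n ^ 2 / A ≤ A / (n + 1 : ℕ) := by
      rw [sub_le_iff_le_add, div_add_div _ _ (by positivity) hA.ne', le_div_iff₀ (by positivity)]
      push_cast
      nlinarith [mul_nonneg (sub_nonneg.2 ih) (sub_nonneg.2 hA'), sq_nonneg (a n)]
    exact (ha n).trans hbound

section RescaledPureGreedy

variable {H : Type*} [NormedAddCommGroup H] [InnerProductSpace ℝ H]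

def IsRescaledPureGreedy (D : Set H) (f : H) (fseq : ℕ → H) : Prop :=
  ∀ m : ℕ,
    (fseq m = f → fseq (m + 1) = f) ∧
    (fseq m ≠ f → ∃ φ ∈ D,
      |⟪f - fseq m, φ⟫| = sSup {x : ℝ | ∃ ψ ∈ D, x = |⟪f - fseq m, ψ⟫|} ∧
      fseq (m + 1) =
        (⟪f, fseq m + ⟪f - fseq m, φ⟫ • φ⟫ / ‖fseq m + ⟪f - fseq m, φ⟫ • φ‖ ^ 2) •
          (fseq m + ⟪f - fseq m, φ⟫ • φ))

namespace IsRescaledPureGreedy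

variable {D : Set H} {f : H} {fseq : ℕ → H}

theorem exists_succ_eq_starProjection (hs : IsRescaledPureGreedy D f fseq) {m : ℕ}
    (hm : fseq m ≠ f) : ∃ φ ∈ D,
      |⟪f - fseq m, φ⟫| = sSup {x : ℝ | ∃ ψ ∈ D, x = |⟪f - fseq m, ψ⟫|} ∧
      fseq (m + 1) = (ℝ ∙ (fseq m + ⟪f - fseq m, φ⟫ • φ)).starProjection f := by
  obtain ⟨φ, hφD, hsup, hnext⟩ := (hs m).2 hm
  exact ⟨φ, hφD, hsup, hnext.trans (smul_inner_div_norm_sq_eq_starProjection _ _)⟩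

theorem inner_sub_self_eq_zero (hs : IsRescaledPureGreedy D f fseq) (h0 : fseq 0 = 0) :
    ∀ m, ⟪f - fseq m, fseq m⟫ = 0
  | 0 => by simp [h0]
  | m + 1 => by
    by_cases hm : fseq m = f
    · simp [(hs m).1 hm]
    · obtain ⟨φ, -, -, hnext⟩ := hs.exists_succ_eq_starProjection hm
      rw [hnext]
      exact Submodule.starProjection_inner_eq_zero _ _ (Submodule.starProjection_apply_mem _ _)

theorem norm_sub_succ_sq_le (hs : IsRescaledPureGreedy D f fseq) (h0 : fseq 0 = 0)
    (hD : ∀ φ ∈ D, ‖φ‖ = 1) {M : ℝ} (hM : 0 < M) (hfM : f ∈ A1 H D M) (m : ℕ) :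
    ‖f - fseq (m + 1)‖ ^ 2 ≤ ‖f - fseq m‖ ^ 2 - (‖f - fseq m‖ ^ 2) ^ 2 / M ^ 2 := by
  by_cases hm : fseq m = f
  · simp [(hs m).1 hm, hm]
  obtain ⟨φ, hφD, hsup, hnext⟩ := hs.exists_succ_eq_starProjection hm
  set r := f - fseq m
  set c := ⟪r, φ⟫
  have hproj : ‖f - fseq (m + 1)‖ ≤ ‖r - c • φ‖ := by
    rw [hnext, show r - c • φ = f - (fseq m + c • φ) by simp only [r]; abel]
    exact Submodule.norm_sub_starProjection_le _ f (Submodule.mem_span_singleton_self _)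
  have hloss : ‖r - c • φ‖ ^ 2 = ‖r‖ ^ 2 - c ^ 2 := by
    rw [norm_sub_sq_real, real_inner_smul_right, norm_smul, Real.norm_eq_abs, mul_pow, sq_abs,
      hD φ hφD]
    ring
  have hrf : ⟪r, f⟫ = ‖r‖ ^ 2 := by
    rw [show f = r + fseq m by simp only [r]; abel, inner_add_right,
      hs.inner_sub_self_eq_zero h0 m, real_inner_self_eq_norm_sq, add_zero]
  have hdual : ‖r‖ ^ 2 / M ≤ |c| := by
    rw [div_le_iff₀ hM, ← hrf, mul_comm]
    exact inner_le_mul_of_mem_A1 hfM (abs_nonneg c) (abs_inner_le_of_eq_sSup hD hsup)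
  calc ‖f - fseq (m + 1)‖ ^ 2 ≤ ‖r‖ ^ 2 - c ^ 2 := by
        rw [← hloss]; gcongr
    _ ≤ ‖r‖ ^ 2 - (‖r‖ ^ 2) ^ 2 / M ^ 2 := by
        rw [← div_pow, ← sq_abs c]; gcongr

theorem norm_sub_le_mul_rpow (hs : IsRescaledPureGreedy D f fseq) (h0 : fseq 0 = 0)
    (hD : ∀ φ ∈ D, ‖φ‖ = 1) {M : ℝ} (hM : 0 < M) (hfM : f ∈ A1 H D M) {m : ℕ} (hm : 1 ≤ m) :
    ‖f - fseq m‖ ≤ M * (m : ℝ) ^ (-(1 : ℝ) / 2) := by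
  have hsq : ‖f - fseq m‖ ^ 2 ≤ M ^ 2 / m := by
    refine le_div_natCast_of_le_sub_sq_div (a := fun n => ‖f - fseq n‖ ^ 2) (by positivity)
      ?_ (hs.norm_sub_succ_sq_le h0 hD hM hfM) m hm
    simpa [h0] using pow_le_pow_left₀ (norm_nonneg f) (norm_le_of_mem_A1 hD hfM) 2
  have hm0 : (0 : ℝ) ≤ m := m.cast_nonneg
  calc ‖f - fseq m‖ = √(‖f - fseq m‖ ^ 2) := (Real.sqrt_sq (norm_nonneg _)).symm
    _ ≤ √(M ^ 2 / m) := Real.sqrt_le_sqrt hsq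
    _ = M * (m : ℝ) ^ (-(1 : ℝ) / 2) := by
        rw [Real.sqrt_div' _ hm0, Real.sqrt_sq hM.le, Real.sqrt_eq_rpow, neg_div,
          Real.rpow_neg hm0, div_eq_mul_inv]

end IsRescaledPureGreedy

end RescaledPureGreedy

theorem rpga_hilbert_rate_general {H : Type*} [NormedAddCommGroup H] [InnerProductSpace ℝ H]
    (D : Set H) (hD : IsDictionary H D) (f : H) (hf : f ∈ A1Class H D)
    (fseq : ℕ → H) (h0 : fseq 0 = 0)
    (hstep : ∀ m : ℕ,
      (fseq m = f → fseq (m + 1) = f) ∧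
      (fseq m ≠ f → ∃ φ ∈ D,
        |⟪f - fseq m, φ⟫| = sSup {x : ℝ | ∃ ψ ∈ D, x = |⟪f - fseq m, ψ⟫|} ∧
        fseq (m + 1) =
          (⟪f, fseq m + ⟪f - fseq m, φ⟫ • φ⟫ / ‖fseq m + ⟪f - fseq m, φ⟫ • φ‖ ^ 2) •
            (fseq m + ⟪f - fseq m, φ⟫ • φ))) :
    ∀ m : ℕ, 1 ≤ m → ‖f - fseq m‖ ≤ A1Norm H D f * (m : ℝ) ^ (-(1 : ℝ) / 2) := by
  have hs : IsRescaledPureGreedy D f fseq := hstep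
  intro m hm
  exact le_A1Norm_mul hf (Real.rpow_pos_of_pos (by exact_mod_cast hm) _) fun M hM hfM =>
    hs.norm_sub_le_mul_rpow h0 hD.1 hM hfM hm

/-- Convergence rate of the Rescaled Pure Greedy Algorithm RPGA(D) in a Hilbert space:
if `f ∈ A₁(D)`, then the output `(f_m)` satisfies
`‖f − f_m‖ ≤ |f|_{A₁(D)} · m^{−1/2}` for all `m ≥ 1`. -/
theorem rpga_hilbert_rate {H : Type*} [NormedAddCommGroup H] [InnerProductSpace ℝ H]
    [CompleteSpace H]
    (D : Set H) (hD : IsDictionary H D) (f : H) (hf : f ∈ A1Class H D)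
    (fseq : ℕ → H) (h0 : fseq 0 = 0)
    (hstep : ∀ m : ℕ,
      (fseq m = f → fseq (m + 1) = f) ∧
      (fseq m ≠ f → ∃ φ ∈ D,
        |⟪f - fseq m, φ⟫| = sSup {x : ℝ | ∃ ψ ∈ D, x = |⟪f - fseq m, ψ⟫|} ∧
        fseq (m + 1) =
          (⟪f, fseq m + ⟪f - fseq m, φ⟫ • φ⟫ / ‖fseq m + ⟪f - fseq m, φ⟫ • φ‖ ^ 2) •
            (fseq m + ⟪f - fseq m, φ⟫ • φ))) :
    ∀ m : ℕ, 1 ≤ m → ‖f - fseq m‖ ≤ A1Norm H D f * (m : ℝ) ^ (-(1 : ℝ) / 2) :=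
  rpga_hilbert_rate_general D hD f hf fseq h0 hstep
end

section
/- Let H be a real Hilbert space, D a dictionary in H, {t_k}_{k=1}^∞ a weakness sequence with t_k ∈ (0, 1] for all k, and f ∈ A_1(D). Suppose (f_m)_{m≥0} is a sequence generated by the Weak Rescaled Pure Greedy Algorithm WRPGA({t_k}, D) for f: f_0 = 0, and for each m ≥ 1, if f_{m−1} = f then f_m := f; otherwise there is φ_m ∈ D with |⟨f − f_{m−1}, φ_m⟩| ≥ t_m · sup_{φ∈D} |⟨f − f_{m−1}, φ⟩|, and with λ_m := ⟨f − f_{m−1}, φ_m⟩, ĥ_m := f_{m−1} + λ_m φ_m, and s_m := ⟨f, ĥ_m⟩ / ‖ĥ_m‖², one sets f_m := s_m ĥ_m. Then for every m ≥ 1, ‖f − f_m‖ ≤ |f|_{A_1(D)} · ( ∑_{k=1}^m t_k² )^{−1/2}. -/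
open scoped BigOperators RealInnerProductSpace

/-- The set of absolute inner products with dictionary elements is bounded above. -/
lemma wrpga_bddAbove {H : Type*} [NormedAddCommGroup H] [InnerProductSpace ℝ H]
    (D : Set H) (hD1 : ∀ φ ∈ D, ‖φ‖ = 1) (g : H) :
    BddAbove {x : ℝ | ∃ ψ ∈ D, x = |⟪g, ψ⟫|} := by
  refine ⟨‖g‖, ?_⟩
  rintro x ⟨ψ, hψ, rfl⟩
  calc |⟪g, ψ⟫| ≤ ‖g‖ * ‖ψ‖ := abs_real_inner_le_norm g ψ
    _ = ‖g‖ := by rw [hD1 ψ hψ, mul_one]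

/-- Duality bound: for `f ∈ A₁(D, M)`, `⟪g, f⟫ ≤ M · sup_{ψ ∈ D} |⟪g, ψ⟫|`. -/
lemma wrpga_dual_bound {H : Type*} [NormedAddCommGroup H] [InnerProductSpace ℝ H]
    (D : Set H) (hD1 : ∀ φ ∈ D, ‖φ‖ = 1) {M : ℝ} (hM : 0 ≤ M) {f : H}
    (hf : f ∈ A1 H D M) (g : H) :
    ⟪g, f⟫ ≤ M * sSup {x : ℝ | ∃ ψ ∈ D, x = |⟪g, ψ⟫|} := by
  set C := sSup {x : ℝ | ∃ ψ ∈ D, x = |⟪g, ψ⟫|} with hC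
  have hbdd := wrpga_bddAbove D hD1 g
  have hmem : ∀ ψ ∈ D, |⟪g, ψ⟫| ≤ C := fun ψ hψ => le_csSup hbdd ⟨ψ, hψ, rfl⟩
  have hC0 : 0 ≤ C := by
    rcases D.eq_empty_or_nonempty with hDe | ⟨ψ, hψ⟩
    · have he : {x : ℝ | ∃ ψ ∈ D, x = |⟪g, ψ⟫|} = ∅ := by simp [hDe]
      rw [hC, he, Real.sSup_empty]
    · exact (abs_nonneg _).trans (hmem ψ hψ)
  have hclosed : IsClosed {h : H | ⟪g, h⟫ ≤ M * C} :=
    isClosed_le (Continuous.inner continuous_const continuous_id) continuous_const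
  have hsub : A1Pre H D M ⊆ {h : H | ⟪g, h⟫ ≤ M * C} := by
    rintro h ⟨n, c, φ, hφ, hsum, rfl⟩
    have : ⟪g, ∑ i, c i • φ i⟫ = ∑ i, c i * ⟪g, φ i⟫ := by
      rw [inner_sum]; exact Finset.sum_congr rfl fun i _ => real_inner_smul_right _ _ _
    rw [Set.mem_setOf_eq, this]
    calc ∑ i, c i * ⟪g, φ i⟫ ≤ ∑ i, |c i| * C := by
          refine Finset.sum_le_sum fun i _ => ?_
          calc c i * ⟪g, φ i⟫ ≤ |c i * ⟪g, φ i⟫| := le_abs_self _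
            _ = |c i| * |⟪g, φ i⟫| := abs_mul _ _
            _ ≤ |c i| * C := mul_le_mul_of_nonneg_left (hmem (φ i) (hφ i)) (abs_nonneg _)
      _ = (∑ i, |c i|) * C := (Finset.sum_mul _ _ _).symm
      _ ≤ M * C := mul_le_mul_of_nonneg_right hsum hC0
  exact closure_minimal hsub hclosed hf

set_option maxHeartbeats 1000000 in
/-- Convergence rate of the Weak Rescaled Pure Greedy Algorithm WRPGA({t_k}, D) in a
real Hilbert space: if `f ∈ A₁(D)`, then the output `(f_m)` satisfies
`‖f − f_m‖ ≤ |f|_{A₁(D)} · (∑_{k=1}^m t_k²)^{−1/2}` for all `m ≥ 1`. -/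
theorem wrpga_hilbert_rate {H : Type*} [NormedAddCommGroup H] [InnerProductSpace ℝ H]
    [CompleteSpace H]
    (D : Set H) (hD : IsDictionary H D)
    (t : ℕ → ℝ) (ht : ∀ k : ℕ, t k ∈ Set.Ioc (0 : ℝ) 1)
    (f : H) (hf : f ∈ A1Class H D)
    (fseq : ℕ → H) (h0 : fseq 0 = 0)
    (hstep : ∀ m : ℕ,
      (fseq m = f → fseq (m + 1) = f) ∧
      (fseq m ≠ f → ∃ φ ∈ D,
        |⟪f - fseq m, φ⟫| ≥ t (m + 1) * sSup {x : ℝ | ∃ ψ ∈ D, x = |⟪f - fseq m, ψ⟫|} ∧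
        fseq (m + 1) =
          (⟪f, fseq m + ⟪f - fseq m, φ⟫ • φ⟫ / ‖fseq m + ⟪f - fseq m, φ⟫ • φ‖ ^ 2) •
            (fseq m + ⟪f - fseq m, φ⟫ • φ))) :
    ∀ m : ℕ, 1 ≤ m →
      ‖f - fseq m‖ ≤ A1Norm H D f * (∑ k ∈ Finset.Icc 1 m, t k ^ 2) ^ (-(1 : ℝ) / 2) := by
  obtain ⟨hD1, _⟩ := hD
  -- Main invariant, for every admissible bound M
  have key : ∀ M : ℝ, 0 < M → f ∈ A1 H D M → ∀ m : ℕ,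
      ⟪f - fseq m, fseq m⟫ = 0 ∧
      ‖f - fseq m‖ ^ 2 * (∑ k ∈ Finset.Icc 1 m, t k ^ 2) ≤ M ^ 2 := by
    intro M hM hfM
    have hM2 : (0:ℝ) < M ^ 2 := by positivity
    intro m
    induction m with
    | zero =>
      constructor
      · simp [h0]
      · rw [show Finset.Icc 1 0 = (∅ : Finset ℕ) from rfl]
        simp
        positivity
    | succ m ih =>
      obtain ⟨ihO, ihS⟩ := ih
      by_cases hfm : fseq m = f
      · have h1 : fseq (m + 1) = f := (hstep m).1 hfm
        rw [h1]
        constructor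
        · simp
        · simp
          positivity
      · obtain ⟨φ, hφD, hge, hrec⟩ := (hstep m).2 hfm
        set g := f - fseq m with hg
        set lr := ⟪g, φ⟫ with hlr
        set hv := fseq m + lr • φ with hhv
        set s := ⟪f, hv⟫ / ‖hv‖ ^ 2 with hs
        clear_value g lr hv s
        have ht1 : 0 < t (m + 1) := (ht (m + 1)).1
        -- Orthogonality at step m+1
        have horth : ⟪f - fseq (m + 1), fseq (m + 1)⟫ = 0 := by
          rw [hrec]
          by_cases hv0 : hv = 0
          · simp [hv0]
          · have hN : (0:ℝ) < ‖hv‖ ^ 2 := by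
              have := norm_pos_iff.mpr hv0; positivity
            have expand : ⟪f - s • hv, s • hv⟫ = s * ⟪f, hv⟫ - s ^ 2 * ‖hv‖ ^ 2 := by
              rw [inner_sub_left, real_inner_smul_right, real_inner_smul_left,
                real_inner_smul_right, real_inner_self_eq_norm_sq]
              ring
            rw [expand, hs]
            field_simp
            ring
        -- duality
        have hdual : ‖g‖ ^ 2 ≤ M * sSup {x : ℝ | ∃ ψ ∈ D, x = |⟪g, ψ⟫|} := by
          have hd := wrpga_dual_bound D hD1 hM.le hfM g
          have hgf : ⟪g, f⟫ = ‖g‖ ^ 2 := by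
            have hfe : f = g + fseq m := by rw [hg]; abel
            calc ⟪g, f⟫ = ⟪g, g + fseq m⟫ := by rw [← hfe]
              _ = ‖g‖ ^ 2 + ⟪g, fseq m⟫ := by
                  rw [inner_add_right, real_inner_self_eq_norm_sq]
              _ = ‖g‖ ^ 2 := by rw [ihO]; ring
          linarith [hd, hgf.ge, hgf.le]
        have hLam : t (m + 1) * ‖g‖ ^ 2 ≤ M * |lr| := by
          calc t (m + 1) * ‖g‖ ^ 2
              ≤ t (m + 1) * (M * sSup {x : ℝ | ∃ ψ ∈ D, x = |⟪g, ψ⟫|}) :=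
                mul_le_mul_of_nonneg_left hdual ht1.le
            _ = M * (t (m + 1) * sSup {x : ℝ | ∃ ψ ∈ D, x = |⟪g, ψ⟫|}) := by ring
            _ ≤ M * |lr| := mul_le_mul_of_nonneg_left hge hM.le
        have hsq : t (m + 1) ^ 2 * (‖g‖ ^ 2) ^ 2 ≤ M ^ 2 * lr ^ 2 := by
          have h1 : (t (m + 1) * ‖g‖ ^ 2) ^ 2 ≤ (M * |lr|) ^ 2 :=
            pow_le_pow_left₀ (by positivity) hLam 2
          rw [mul_pow, mul_pow, sq_abs] at h1
          exact h1
        -- error decay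
        have hb1 : ‖f - fseq (m + 1)‖ ^ 2 ≤ ‖f - hv‖ ^ 2 := by
          rw [hrec]
          by_cases hv0 : hv = 0
          · simp [hv0]
          · have hN : (0:ℝ) < ‖hv‖ ^ 2 := by
              have := norm_pos_iff.mpr hv0; positivity
            have e1 : ‖f - s • hv‖ ^ 2
                = ‖f‖ ^ 2 - 2 * (s * ⟪f, hv⟫) + s ^ 2 * ‖hv‖ ^ 2 := by
              rw [norm_sub_sq_real, real_inner_smul_right, norm_smul, Real.norm_eq_abs,
                mul_pow, sq_abs]
            have e2 : ‖f - hv‖ ^ 2 = ‖f‖ ^ 2 - 2 * ⟪f, hv⟫ + ‖hv‖ ^ 2 :=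
              norm_sub_sq_real f hv
            have hsN : s * ‖hv‖ ^ 2 = ⟪f, hv⟫ := by
              rw [hs]; field_simp
            have hsNI : s * ⟪f, hv⟫ * ‖hv‖ ^ 2 = ⟪f, hv⟫ ^ 2 := by
              rw [mul_comm s, mul_assoc, hsN]; ring
            rw [e1, e2]
            nlinarith [hN, hsN, hsNI, sq_nonneg (⟪f, hv⟫ - ‖hv‖ ^ 2)]
        have hb2 : ‖f - hv‖ ^ 2 = ‖g‖ ^ 2 - lr ^ 2 := by
          have hfv : f - hv = g - lr • φ := by rw [hhv, hg]; abel
          rw [hfv, norm_sub_sq_real, real_inner_smul_right, ← hlr, norm_smul,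
            hD1 φ hφD, mul_one, Real.norm_eq_abs, sq_abs]
          ring
        have hA : ‖f - fseq (m + 1)‖ ^ 2 ≤ ‖g‖ ^ 2 - lr ^ 2 := hb2 ▸ hb1
        refine ⟨horth, ?_⟩
        rw [Finset.sum_Icc_succ_top (Nat.le_add_left 1 m)]
        -- abbreviations for the final algebra
        set a := ‖g‖ ^ 2 with ha
        set b := ‖f - fseq (m + 1)‖ ^ 2 with hb
        set T := t (m + 1) with hT
        set S := ∑ k ∈ Finset.Icc 1 m, t k ^ 2 with hS
        clear_value a b T S
        have ha0 : 0 ≤ a := by rw [ha]; positivity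
        have hb0 : 0 ≤ b := by rw [hb]; positivity
        have hS0 : 0 ≤ S := by
          rw [hS]; exact Finset.sum_nonneg fun k _ => sq_nonneg _
        have hT0 : 0 ≤ T ^ 2 := sq_nonneg _
        have hbM : b * M ^ 2 ≤ a * M ^ 2 - T ^ 2 * a ^ 2 := by
          have h2 := mul_le_mul_of_nonneg_right hA hM2.le
          nlinarith [hsq, h2]
        have hMa : (0:ℝ) < M ^ 2 + T ^ 2 * a := by positivity
        have key1 : b * (M ^ 2 + T ^ 2 * a) ≤ a * M ^ 2 := by
          have h2 := mul_le_mul_of_nonneg_right hbM hMa.le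
          have h3 : (a * M ^ 2 - T ^ 2 * a ^ 2) * (M ^ 2 + T ^ 2 * a)
              ≤ a * M ^ 2 * M ^ 2 := by
            nlinarith [mul_nonneg (mul_nonneg hT0 hT0) (mul_nonneg ha0 (mul_nonneg ha0 ha0))]
          have h4 : b * (M ^ 2 + T ^ 2 * a) * M ^ 2 ≤ a * M ^ 2 * M ^ 2 := by nlinarith [h2, h3]
          exact le_of_mul_le_mul_right h4 hM2
        have h6 := mul_le_mul_of_nonneg_left key1 hS0
        have h7 := mul_le_mul_of_nonneg_left key1 hT0
        have h8 := mul_le_mul_of_nonneg_right ihS hM2.le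
        have h5 : b * (S + T ^ 2) * (M ^ 2 + T ^ 2 * a) ≤ M ^ 2 * (M ^ 2 + T ^ 2 * a) := by
          nlinarith [h6, h7, h8]
        exact le_of_mul_le_mul_right h5 hMa
  -- conclude
  intro m hm
  have hS : (0:ℝ) < ∑ k ∈ Finset.Icc 1 m, t k ^ 2 :=
    Finset.sum_pos (fun k _ => pow_pos (ht k).1 2) (by rw [Finset.nonempty_Icc]; exact hm)
  set S := ∑ k ∈ Finset.Icc 1 m, t k ^ 2 with hSdef
  have hsqrt : 0 < Real.sqrt S := Real.sqrt_pos.mpr hS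
  have hle : ‖f - fseq m‖ * Real.sqrt S ≤ A1Norm H D f := by
    apply le_csInf
    · simp only [A1Class, Set.mem_iUnion, Set.mem_Ioi, exists_prop] at hf
      obtain ⟨M0, hM0, hfM0⟩ := hf
      exact ⟨M0, hM0, hfM0⟩
    · rintro M ⟨hM, hfM⟩
      have h2 := (key M hM hfM m).2
      have hsq2 : (‖f - fseq m‖ * Real.sqrt S) ^ 2 ≤ M ^ 2 := by
        rw [mul_pow, Real.sq_sqrt hS.le]
        exact h2
      have hx0 : 0 ≤ ‖f - fseq m‖ * Real.sqrt S := by positivity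
      exact (pow_le_pow_iff_left₀ hx0 hM.le two_ne_zero).mp hsq2
  have hrw : S ^ (-(1:ℝ) / 2) = (Real.sqrt S)⁻¹ := by
    rw [show (-(1:ℝ) / 2) = -(1 / 2 : ℝ) by ring, Real.rpow_neg hS.le, ← Real.sqrt_eq_rpow]
  rw [hrw, ← div_eq_mul_inv, le_div_iff₀ hsqrt]
  exact hle
end

section
/- Let H be a real Hilbert space, D a dictionary in H, {t_k} a weakness sequence with t_k ∈ (0,1], M > 0, and f ∈ A_1(D, M). Suppose f_{m−1} ∈ H satisfies ⟨f − f_{m−1}, f_{m−1}⟩ = 0 and f_{m−1} ≠ f, and φ_m ∈ D satisfies |⟨f − f_{m−1}, φ_m⟩| ≥ t_m · sup_{φ∈D} |⟨f − f_{m−1}, φ⟩|. Then M^{−1} t_m ‖f − f_{m−1}‖² ≤ |⟨f − f_{m−1}, φ_m⟩|. -/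
open scoped BigOperators RealInnerProductSpace

theorem ContinuousLinearMap.le_mul_of_mem_A1Pre {H : Type*} [NormedAddCommGroup H]
    [NormedSpace ℝ H] {D : Set H} {M s : ℝ} (ℓ : H →L[ℝ] ℝ) (hs : 0 ≤ s)
    (hbound : ∀ φ ∈ D, |ℓ φ| ≤ s) {f : H} (hf : f ∈ A1Pre H D M) : ℓ f ≤ M * s := by
  obtain ⟨n, c, φ, hφD, hsum, rfl⟩ := hf
  calc ℓ (∑ i, c i • φ i) = ∑ i, c i * ℓ (φ i) := by simp
    _ ≤ ∑ i, |c i| * s := Finset.sum_le_sum fun i _ ↦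
      calc c i * ℓ (φ i) ≤ |c i| * |ℓ (φ i)| := by rw [← abs_mul]; exact le_abs_self _
        _ ≤ |c i| * s := by gcongr; exact hbound _ (hφD i)
    _ = (∑ i, |c i|) * s := Finset.sum_mul .. |>.symm
    _ ≤ M * s := by gcongr

theorem ContinuousLinearMap.le_mul_of_mem_A1 {H : Type*} [NormedAddCommGroup H]
    [NormedSpace ℝ H] {D : Set H} {M s : ℝ} (ℓ : H →L[ℝ] ℝ) (hs : 0 ≤ s)
    (hbound : ∀ φ ∈ D, |ℓ φ| ≤ s) {f : H} (hf : f ∈ A1 H D M) : ℓ f ≤ M * s :=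
  closure_minimal (fun _ h ↦ ℓ.le_mul_of_mem_A1Pre hs hbound h)
    (isClosed_le ℓ.continuous continuous_const) hf

theorem abs_inner_le_sSup_of_norm_eq_one {H : Type*} [NormedAddCommGroup H]
    [InnerProductSpace ℝ H] {D : Set H} (hD : ∀ φ ∈ D, ‖φ‖ = 1) (g : H) {φ : H} (hφ : φ ∈ D) :
    |⟪g, φ⟫| ≤ sSup {x : ℝ | ∃ φ ∈ D, x = |⟪g, φ⟫|} := by
  refine le_csSup ⟨‖g‖, ?_⟩ ⟨φ, hφ, rfl⟩
  rintro _ ⟨ψ, hψ, rfl⟩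
  simpa [hD ψ hψ] using abs_real_inner_le_norm g ψ

theorem norm_sub_sq_eq_inner_of_inner_sub_eq_zero {H : Type*} [NormedAddCommGroup H]
    [InnerProductSpace ℝ H] {f h : H} (horth : ⟪f - h, h⟫ = 0) :
    ‖f - h‖ ^ 2 = ⟪f - h, f⟫ := by
  rw [← real_inner_self_eq_norm_sq, inner_sub_right, horth, sub_zero]

theorem weak_greedy_selection_lower_bound_general {H : Type*} [NormedAddCommGroup H]
    [InnerProductSpace ℝ H]
    (D : Set H) (hD : IsDictionary H D)
    (tm : ℝ) (htm : tm ∈ Set.Ioc (0 : ℝ) 1)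
    (M : ℝ) (hM : 0 < M) (f : H) (hf : f ∈ A1 H D M)
    (fm1 : H) (horth : ⟪f - fm1, fm1⟫ = 0)
    (φm : H) (hφm : φm ∈ D)
    (hsel : |⟪f - fm1, φm⟫| ≥ tm * sSup {x : ℝ | ∃ φ ∈ D, x = |⟪f - fm1, φ⟫|}) :
    M⁻¹ * tm * ‖f - fm1‖ ^ 2 ≤ |⟪f - fm1, φm⟫| := by
  set s := sSup {x : ℝ | ∃ φ ∈ D, x = |⟪f - fm1, φ⟫|}
  have hbound : ∀ φ ∈ D, |⟪f - fm1, φ⟫| ≤ s :=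
    fun _ hφ ↦ abs_inner_le_sSup_of_norm_eq_one hD.1 _ hφ
  have hf_inner : ⟪f - fm1, f⟫ ≤ M * s :=
    (innerSL ℝ (f - fm1)).le_mul_of_mem_A1 ((abs_nonneg _).trans (hbound φm hφm)) hbound hf
  have htm₀ : 0 < tm := htm.1
  calc M⁻¹ * tm * ‖f - fm1‖ ^ 2 = M⁻¹ * tm * ⟪f - fm1, f⟫ := by
        rw [norm_sub_sq_eq_inner_of_inner_sub_eq_zero horth]
    _ ≤ M⁻¹ * tm * (M * s) := by gcongr
    _ = tm * s := by field_simp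
    _ ≤ |⟪f - fm1, φm⟫| := hsel

/-- Lower bound for the weak greedy selection in a real Hilbert space:
if `f ∈ A₁(D, M)`, `⟪f − f_{m−1}, f_{m−1}⟫ = 0`, `f_{m−1} ≠ f`, and `φ_m ∈ D` satisfies
`|⟪f − f_{m−1}, φ_m⟫| ≥ t_m sup_{φ ∈ D} |⟪f − f_{m−1}, φ⟫|`, then
`M⁻¹ t_m ‖f − f_{m−1}‖² ≤ |⟪f − f_{m−1}, φ_m⟫|`. -/
theorem weak_greedy_selection_lower_bound {H : Type*} [NormedAddCommGroup H]
    [InnerProductSpace ℝ H] [CompleteSpace H]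
    (D : Set H) (hD : IsDictionary H D)
    (tm : ℝ) (htm : tm ∈ Set.Ioc (0 : ℝ) 1)
    (M : ℝ) (hM : 0 < M) (f : H) (hf : f ∈ A1 H D M)
    (fm1 : H) (horth : ⟪f - fm1, fm1⟫ = 0) (hne : fm1 ≠ f)
    (φm : H) (hφm : φm ∈ D)
    (hsel : |⟪f - fm1, φm⟫| ≥ tm * sSup {x : ℝ | ∃ φ ∈ D, x = |⟪f - fm1, φ⟫|}) :
    M⁻¹ * tm * ‖f - fm1‖ ^ 2 ≤ |⟪f - fm1, φm⟫| :=
  weak_greedy_selection_lower_bound_general D hD tm htm M hM f hf fm1 horth φm hφm hsel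
end
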